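/- Let Q be the total quotient ring (localization at nonzerodivisors) of S = F[[x,y]]/(x²y). Then the element u = x(x+y)^{-1} of Q satisfies u² = u³, so e = u² is an idempotent in Q. -/

import Mathlib

noncomputable section

/-- The D-infinity plane singularity `S = F[[x,y]]/(x²y)`. -/
abbrev Dinf (F : Type*) [Field F] : Type _ :=
  MvPowerSeries (Fin 2) F ⧸
    (Ideal.span {(MvPowerSeries.X (0 : Fin 2)) ^ 2 * MvPowerSeries.X 1} :
      Ideal (MvPowerSeries (Fin 2) F))

variable (F : Type*) [Field F]

/-- The image of the variable `x` in `S`. -/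
abbrev xS : Dinf F := Ideal.Quotient.mk _ (MvPowerSeries.X 0)

/-- The image of the variable `y` in `S`. -/
abbrev yS : Dinf F := Ideal.Quotient.mk _ (MvPowerSeries.X 1)

/-- The total quotient ring `Q` of `S`, the localization at the nonzerodivisors. -/
abbrev QS : Type _ := Localization (nonZeroDivisors (Dinf F))

/-- The canonical map `S → Q`. -/
abbrev toQ : Dinf F →+* QS F := algebraMap (Dinf F) (QS F)

/-!
The variables `x` and `y` are prime in `F[[x,y]]` and neither divides `x + y`, so `x + y` is a
nonzerodivisor modulo `x²y` and hence a unit in `Q`. Writing `t = x + y`, `u t = x` gives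
`(u² - u³) t³ = x² t - x³ = x² y = 0`, so `u² = u³`, and then `u⁴ = u³ = u²`.
-/

namespace MvPowerSeries

variable {σ R : Type*}

theorem X_prime [CommRing R] [IsDomain R] (s : σ) : Prime (X s : MvPowerSeries σ R) := by
  classical
  have : IsDomain (MvPowerSeries {t // t ≠ s} R) := NoZeroDivisors.to_isDomain _
  let e := (renameEquiv R (Equiv.optionSubtypeNe s).symm).trans (optionEquivLeft {t // t ≠ s} R)
  have he : e (X s) = PowerSeries.X := by
    simp [e, renameEquiv_apply, rename_X, optionEquivLeft_X_none]
  rw [← MulEquiv.prime_iff e, he]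
  exact PowerSeries.X_prime

theorem X_not_dvd_X [Semiring R] [Nontrivial R] {s t : σ} (h : s ≠ t) :
    ¬ (X s : MvPowerSeries σ R) ∣ X t := by
  classical
  rw [X_dvd_iff, not_forall]
  exact ⟨Finsupp.single t 1, by simp [h, coeff_X]⟩

end MvPowerSeries

theorem Prime.pow_mul_dvd_of_dvd_mul_left {M : Type*} [CommMonoidWithZero M] [IsCancelMulZero M]
    {p q t f : M}
    (hp : Prime p) (hq : Prime q) (hpq : ¬ p ∣ q) (hpt : ¬ p ∣ t) (hqt : ¬ q ∣ t) (n : ℕ)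
    (h : p ^ n * q ∣ t * f) : p ^ n * q ∣ f := by
  obtain ⟨g, rfl⟩ : q ∣ f := (hq.dvd_or_dvd (dvd_of_mul_left_dvd h)).resolve_left hqt
  have hpg : p ^ n ∣ g :=
    hp.pow_dvd_of_dvd_mul_left n hpq <| hp.pow_dvd_of_dvd_mul_left n hpt <| by
      simpa only [mul_assoc] using dvd_of_mul_right_dvd h
  rw [mul_comm q]
  exact mul_dvd_mul_right hpg q

theorem Ideal.Quotient.mk_mem_nonZeroDivisors_of_dvd {R : Type*} [CommRing R] {m t : R}
    (h : ∀ f, m ∣ t * f → m ∣ f) :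
    Ideal.Quotient.mk (Ideal.span {m}) t ∈ nonZeroDivisors (R ⧸ Ideal.span {m}) := by
  rw [mem_nonZeroDivisors_iff_left]
  rintro c hc
  obtain ⟨f, rfl⟩ := Ideal.Quotient.mk_surjective c
  rw [← map_mul, Ideal.Quotient.eq_zero_iff_mem, Ideal.mem_span_singleton] at hc
  rw [Ideal.Quotient.eq_zero_iff_mem, Ideal.mem_span_singleton]
  exact h f hc

theorem sq_eq_pow_three_of_mul_eq {M : Type*} [CommMonoid M] {u t a : M} (ht : IsUnit t)
    (hu : u * t = a) (ha : a ^ 2 * t = a ^ 3) : u ^ 2 = u ^ 3 :=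
  (ht.pow 3).mul_left_injective <| by
    calc u ^ 2 * t ^ 3 = (u * t) ^ 2 * t := by rw [mul_pow, mul_assoc, ← pow_succ]
      _ = (u * t) ^ 3 := by rw [hu, ha]
      _ = u ^ 3 * t ^ 3 := mul_pow u t 3

theorem isIdempotentElem_sq_of_sq_eq_pow_three {M : Type*} [Monoid M] {u : M}
    (h : u ^ 2 = u ^ 3) :
    IsIdempotentElem (u ^ 2) :=
  calc u ^ 2 * u ^ 2 = u ^ 3 * u := by rw [← pow_add, ← pow_succ]
    _ = u ^ 2 * u := by rw [← h]
    _ = u ^ 3 := (pow_succ u 2).symm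
    _ = u ^ 2 := h.symm

theorem xS_add_yS_mem_nonZeroDivisors : xS F + yS F ∈ nonZeroDivisors (Dinf F) := by
  have hx := MvPowerSeries.X_prime (R := F) (0 : Fin 2)
  have hy := MvPowerSeries.X_prime (R := F) (1 : Fin 2)
  refine Ideal.Quotient.mk_mem_nonZeroDivisors_of_dvd fun f hf ↦
    hx.pow_mul_dvd_of_dvd_mul_left hy (MvPowerSeries.X_not_dvd_X (by decide)) ?_ ?_ 2 hf
  · rw [dvd_add_right (dvd_refl _)]
    exact MvPowerSeries.X_not_dvd_X (by decide)
  · rw [dvd_add_left (dvd_refl _)]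
    exact MvPowerSeries.X_not_dvd_X (by decide)

theorem stmt7 (u : QS F) (hu : u * toQ F (xS F + yS F) = toQ F (xS F)) :
    u ^ 2 = u ^ 3 ∧ IsIdempotentElem (u ^ 2) := by
  have hunit : IsUnit (toQ F (xS F + yS F)) :=
    IsLocalization.map_units (QS F) ⟨_, xS_add_yS_mem_nonZeroDivisors F⟩
  have hx2y : xS F ^ 2 * yS F = 0 := Ideal.Quotient.eq_zero_iff_mem.mpr (Ideal.subset_span rfl)
  have hx3 : xS F ^ 2 * (xS F + yS F) = xS F ^ 3 := by
    rw [mul_add, ← pow_succ, hx2y, add_zero]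
  have hx3Q : toQ F (xS F) ^ 2 * toQ F (xS F + yS F) = toQ F (xS F) ^ 3 := by
    rw [← map_pow, ← map_mul, hx3, map_pow]
  have hcube : u ^ 2 = u ^ 3 := sq_eq_pow_three_of_mul_eq (M := QS F) hunit hu hx3Q
  exact ⟨hcube, isIdempotentElem_sq_of_sq_eq_pow_three hcube⟩
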